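/- If x ≠ y lie in the same one of the sets N_v − w, N_w − v, N_vw, then the adjacency between x and y is the same in ((G_cru^v)_cru^w)_cru^v as in G. -/

import Mathlib

/-- The six vertex marks of a multiply marked graph. -/
inductive Mark : Type
  | un | r | c | cr | u | ur
deriving DecidableEq

/-- A (multiply marked) graph: symmetric irreflexive adjacency, loops,
marks, and a number of free loops. -/
structure MGraph (V : Type) [DecidableEq V] : Type where
  adj : V → V → Bool
  adj_symm : ∀ x y, adj x y = adj y x
  adj_irrefl : ∀ x, adj x x = false
  loop : V → Bool
  mark : V → Mark
  freeLoops : ℕ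

namespace MGraph

variable {V : Type} [DecidableEq V]

/-- The mark change at `v` itself: unmarked↔u, r↔ur, c↔cr. -/
def flipV : Mark → Mark
  | .un => .u | .u => .un | .r => .ur | .ur => .r | .c => .cr | .cr => .c

/-- The mark change at neighbors of `v`: unmarked↔r, c↔ur, u↔cr. -/
def flipN : Mark → Mark
  | .un => .r | .r => .un | .c => .ur | .ur => .c | .u => .cr | .cr => .u

/-- The marked local complement `G_cru^v`. -/
def mlc (G : MGraph V) (v : V) : MGraph V where
  adj x y := if x ≠ y ∧ G.adj v x = true ∧ G.adj v y = true then !(G.adj x y) else G.adj x y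
  adj_symm := by
    intro x y
    try dsimp only
    by_cases h : x ≠ y ∧ G.adj v x = true ∧ G.adj v y = true
    · rw [if_pos h, if_pos ⟨h.1.symm, h.2.2, h.2.1⟩, G.adj_symm]
    · rw [if_neg h, if_neg (fun h' => h ⟨h'.1.symm, h'.2.2, h'.2.1⟩), G.adj_symm]
  adj_irrefl := by
    intro x
    try dsimp only
    rw [if_neg (fun h => h.1 rfl), G.adj_irrefl]
  loop := G.loop
  mark x := if x = v then flipV (G.mark x)
            else if G.adj v x = true then flipN (G.mark x) else G.mark x
  freeLoops := G.freeLoops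

end MGraph

namespace MGraph

variable {V : Type} [DecidableEq V]

/-- Membership in `N_v − w`: neighbors of `v` that are not neighbors of `w`,
other than `w` itself. -/
def inNv (G : MGraph V) (v w x : V) : Prop :=
  G.adj v x = true ∧ G.adj w x = false ∧ x ≠ w

/-- Membership in `N_w − v`: neighbors of `w` that are not neighbors of `v`,
other than `v` itself. -/
def inNw (G : MGraph V) (v w x : V) : Prop :=
  G.adj w x = true ∧ G.adj v x = false ∧ x ≠ v

/-- Membership in `N_vw`: common neighbors of `v` and `w`. -/
def inNvw (G : MGraph V) (v w x : V) : Prop :=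
  G.adj v x = true ∧ G.adj w x = true

/-- `x` and `y` lie in different elements of `{N_v − w, N_w − v, N_vw}`. -/
def diffClass (G : MGraph V) (v w x y : V) : Prop :=
  (G.inNv v w x ∧ (G.inNw v w y ∨ G.inNvw v w y)) ∨
  (G.inNw v w x ∧ (G.inNv v w y ∨ G.inNvw v w y)) ∨
  (G.inNvw v w x ∧ (G.inNv v w y ∨ G.inNw v w y))

end MGraph

/-- The mark change at the pivot vertices: c↔unmarked, r↔cr, u↔ur. -/
def pivotMark : Mark → Mark
  | .c => .un | .un => .c | .r => .cr | .cr => .r | .u => .ur | .ur => .u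


/-! Write `a z`, `b z` for the adjacency of `z` to `v` and `w`. The first `mlc v` toggles `xy` by
`a x a y`; afterwards `w` sees `a + b`, so `mlc w` toggles by `(a x + b x)(a y + b y)`; afterwards
`v` sees `b`, so the last `mlc v` toggles by `b x b y`. Over `𝔽₂` these sum to
`a x b y + b x a y`, which vanishes when `x` and `y` have the same adjacencies to `v` and `w`. -/

namespace MGraph

variable {V : Type} [DecidableEq V] (G : MGraph V) {v w x y : V}

theorem ne_of_adj (h : G.adj x y = true) : x ≠ y := by
  rintro rfl
  simp [G.adj_irrefl] at h

theorem mlc_adj (hxy : x ≠ y) :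
    (G.mlc v).adj x y = (G.adj x y ^^ (G.adj v x && G.adj v y)) := by
  simp only [mlc, ne_eq, hxy, not_false_eq_true, true_and]
  cases G.adj v x <;> cases G.adj v y <;> simp

theorem mlc_adj_self (x : V) : (G.mlc v).adj v x = G.adj v x := by
  simp [mlc, G.adj_irrefl]

theorem mlc_adj_of_adj (hvw : G.adj v w = true) (hwx : w ≠ x) :
    (G.mlc v).adj w x = (G.adj v x ^^ G.adj w x) := by
  rw [G.mlc_adj hwx, hvw, Bool.true_and, Bool.xor_comm]

theorem mlc_mlc_adj_self (hvw : G.adj v w = true) (hxv : x ≠ v) (hxw : x ≠ w) :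
    ((G.mlc v).mlc w).adj v x = G.adj w x := by
  have hwv : (G.mlc v).adj w v = true := by
    rw [(G.mlc v).adj_symm, mlc_adj_self, hvw]
  rw [mlc_adj _ hxv.symm, mlc_adj_self, mlc_adj_of_adj _ hvw hxw.symm, hwv, Bool.true_and]
  exact Bool.bne_self_left _ _

theorem mlc_mlc_mlc_adj (hvw : G.adj v w = true) (hxv : x ≠ v) (hxw : x ≠ w) (hyv : y ≠ v)
    (hyw : y ≠ w) (hxy : x ≠ y) :
    (((G.mlc v).mlc w).mlc v).adj x y =
      (G.adj x y ^^ ((G.adj v x && G.adj w y) ^^ (G.adj w x && G.adj v y))) := by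
  rw [mlc_adj _ hxy, mlc_mlc_adj_self _ hvw hxv hxw, mlc_mlc_adj_self _ hvw hyv hyw,
    mlc_adj _ hxy, mlc_adj_of_adj _ hvw hxw.symm, mlc_adj_of_adj _ hvw hyw.symm, mlc_adj _ hxy]
  cases G.adj x y <;> cases G.adj v x <;> cases G.adj v y <;> cases G.adj w x <;>
    cases G.adj w y <;> rfl

end MGraph

theorem marked_pivot_same_class_general {V : Type} [DecidableEq V] (G : MGraph V)
    (v w : V) (hadj : G.adj v w = true) (x y : V) (hxy : x ≠ y)
    (hsame : (G.inNv v w x ∧ G.inNv v w y) ∨ (G.inNw v w x ∧ G.inNw v w y) ∨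
      (G.inNvw v w x ∧ G.inNvw v w y)) :
    (((G.mlc v).mlc w).mlc v).adj x y = G.adj x y := by
  obtain ⟨hxv, hxw, hyv, hyw, hvxy, hwxy⟩ : x ≠ v ∧ x ≠ w ∧ y ≠ v ∧ y ≠ w ∧
      G.adj v x = G.adj v y ∧ G.adj w x = G.adj w y := by
    rcases hsame with ⟨⟨hvx, hwx, hxw⟩, hvy, hwy, hyw⟩ | ⟨⟨hwx, hvx, hxv⟩, hwy, hvy, hyv⟩ |
        ⟨⟨hvx, hwx⟩, hvy, hwy⟩
    · exact ⟨(G.ne_of_adj hvx).symm, hxw, (G.ne_of_adj hvy).symm, hyw, by rw [hvx, hvy],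
        by rw [hwx, hwy]⟩
    · exact ⟨hxv, (G.ne_of_adj hwx).symm, hyv, (G.ne_of_adj hwy).symm, by rw [hvx, hvy],
        by rw [hwx, hwy]⟩
    · exact ⟨(G.ne_of_adj hvx).symm, (G.ne_of_adj hwx).symm, (G.ne_of_adj hvy).symm,
        (G.ne_of_adj hwy).symm, by rw [hvx, hvy], by rw [hwx, hwy]⟩
  rw [G.mlc_mlc_mlc_adj hadj hxv hxw hyv hyw hxy, hvxy, hwxy, Bool.and_comm (G.adj w y),
    Bool.xor_self, Bool.xor_false]

/-- if `x ≠ y` lie in the same one of the sets `N_v − w`,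
`N_w − v`, `N_vw`, then their adjacency is the same in the marked pivot
`((G_cru^v)_cru^w)_cru^v` as in `G`. -/
theorem marked_pivot_same_class {V : Type} [DecidableEq V] (G : MGraph V)
    (v w : V) (hvw : v ≠ w) (hadj : G.adj v w = true) (x y : V) (hxy : x ≠ y)
    (hsame : (G.inNv v w x ∧ G.inNv v w y) ∨ (G.inNw v w x ∧ G.inNw v w y) ∨
      (G.inNvw v w x ∧ G.inNvw v w y)) :
    (((G.mlc v).mlc w).mlc v).adj x y = G.adj x y :=
  marked_pivot_same_class_general G v w hadj x y hxy hsame
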